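/- For the stored energy W(F) = √(|F|² + 2 det F) + (k/2)(det F − (1+k)/k)² on 2×2 matrices with positive determinant, the restriction to dilatations φ(J) = W(√J · I) equals 2√J + (k/2)(J − (1+k)/k)², and for k ≥ 2, φ attains its global minimum over J > 0 at J = 1; hence J = 1 is a point of convexity of φ: φ(J) ≥ φ(1) + φ′(1)(J − 1) for all J > 0. -/
import Mathlib


open Matrix Real

/-- The stored energy W(F) = √(|F|² + 2 det F) + (k/2)(det F − (1+k)/k)²
on 2×2 matrices (|F|² is the squared Frobenius norm). -/
noncomputable def Wk (k : ℝ) (F : Matrix (Fin 2) (Fin 2) ℝ) : ℝ :=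
  Real.sqrt ((∑ i, ∑ j, (F i j) ^ 2) + 2 * F.det) +
    k / 2 * (F.det - (1 + k) / k) ^ 2

/-- The restriction of W to dilatations, φ(J) = W(√J · I). -/
noncomputable def phik (k : ℝ) (J : ℝ) : ℝ :=
  Wk k (Real.sqrt J • (1 : Matrix (Fin 2) (Fin 2) ℝ))

lemma phik_formula (k : ℝ) {J : ℝ} (hJ : 0 ≤ J) :
    phik k J = 2 * Real.sqrt J + k / 2 * (J - (1 + k) / k) ^ 2 := by
  have hs : Real.sqrt J ^ 2 = J := Real.sq_sqrt hJ
  have hdet : (Real.sqrt J • (1 : Matrix (Fin 2) (Fin 2) ℝ)).det = J := by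
    rw [Matrix.det_smul, Matrix.det_one]
    simp [hs]
  unfold phik Wk
  rw [hdet]
  have hsum : (∑ i, ∑ j, ((Real.sqrt J • (1 : Matrix (Fin 2) (Fin 2) ℝ)) i j) ^ 2) = 2 * J := by
    simp [Fin.sum_univ_two, Matrix.smul_apply, Matrix.one_apply]
    nlinarith [hs]
  rw [hsum]
  have : 2 * J + 2 * J = (2:ℝ)^2 * J := by ring
  rw [this, Real.sqrt_mul (by positivity), Real.sqrt_sq (by norm_num : (0:ℝ) ≤ 2)]

lemma phik_min (k : ℝ) (hk : 0 < k) (hk2 : 2 ≤ k) {J : ℝ} (hJ : 0 < J) :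
    phik k 1 ≤ phik k J := by
  rw [phik_formula k hJ.le, phik_formula k (zero_le_one)]
  set t := Real.sqrt J with ht
  have ht0 : 0 < t := Real.sqrt_pos.mpr hJ
  have hts : t ^ 2 = J := Real.sq_sqrt hJ.le
  rw [Real.sqrt_one, ← hts]
  have hkne : k ≠ 0 := hk.ne'
  have key : (2 * t + k / 2 * (t^2 - (1+k)/k)^2) - (2 * 1 + k / 2 * (1 - (1+k)/k)^2)
      = (t - 1)^2 * (k * (t+1)^2 / 2 - 1) := by
    field_simp
    ring
  have h3 : 0 ≤ k * (t+1)^2 / 2 - 1 := by nlinarith [sq_nonneg t, ht0]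
  nlinarith [mul_nonneg (sq_nonneg (t - 1)) h3, key]

lemma phik_deriv (k : ℝ) (hk : 0 < k) : deriv (phik k) 1 = 0 := by
  have hev : phik k =ᶠ[nhds (1:ℝ)] fun J => 2 * Real.sqrt J + k / 2 * (J - (1+k)/k)^2 := by
    filter_upwards [Ioi_mem_nhds (by norm_num : (0:ℝ) < 1)] with J hJ
    exact phik_formula k (le_of_lt hJ)
  rw [hev.deriv_eq]
  have h2 : HasDerivAt (fun J : ℝ => k / 2 * (J - (1+k)/k)^2) (k / 2 * (2 * (1 - (1+k)/k))) 1 := by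
    have := (((hasDerivAt_id (1:ℝ)).sub_const ((1+k)/k)).pow 2).const_mul (k/2)
    simpa using this
  have h1 : HasDerivAt (fun J => 2 * Real.sqrt J + k / 2 * (J - (1+k)/k)^2)
      (2 * (1 / (2 * Real.sqrt 1)) + k / 2 * (2 * (1 - (1+k)/k))) 1 :=
    ((Real.hasDerivAt_sqrt one_ne_zero).const_mul 2).add h2
  rw [h1.deriv, Real.sqrt_one]
  field_simp
  ring

/-- φ(J) = W(√J·I) = 2√J + (k/2)(J − (1+k)/k)² for J > 0, and for
k ≥ 2 the point J = 1 is a global minimum of φ on (0,∞); hence J = 1 is a point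
of convexity of φ: φ(J) ≥ φ(1) + φ′(1)(J − 1) for all J > 0. -/
theorem dilatational_energy_formula_and_convexity_point (k : ℝ) (hk : 0 < k) :
    (∀ J : ℝ, 0 < J →
      phik k J = 2 * Real.sqrt J + k / 2 * (J - (1 + k) / k) ^ 2) ∧
    (2 ≤ k →
      (∀ J : ℝ, 0 < J → phik k 1 ≤ phik k J) ∧
      (∀ J : ℝ, 0 < J →
        phik k 1 + deriv (phik k) 1 * (J - 1) ≤ phik k J)) := by
  refine ⟨fun J hJ => phik_formula k hJ.le, fun hk2 => ⟨fun J hJ => phik_min k hk hk2 hJ, ?_⟩⟩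
  intro J hJ
  rw [phik_deriv k hk]
  simpa using phik_min k hk hk2 hJ
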